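/- arXiv:2209.14079 — 6 statements merged into one kernel-verified Lean document; each statement's English description precedes it below -/
import Mathlib

section
/- Let G be a finite simple graph and let p be a path in G from a vertex a to a vertex b. Let i ≤ j ≤ k ≤ length(p) be natural numbers. If the i-th vertex of p and the k-th vertex of p are biconnected in G, then the i-th vertex of p and the j-th vertex of p are either equal or biconnected in G. (This expresses the paper's Lemma 'endpoints': the intersection of a biconnected component with a path of the graph is a contiguous subpath, possibly a single vertex or empty.) -/
open SimpleGraph

/-- A walk from `p.getVert m` to `p.getVert n` using only vertices of `p` with indices in
`[m, n]`. -/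
lemma subwalk_exists {V : Type*} {G : SimpleGraph V} {a b : V} (p : G.Walk a b)
    (m n : ℕ) (hmn : m ≤ n) (hn : n ≤ p.length) :
    ∃ q : G.Walk (p.getVert m) (p.getVert n),
      ∀ x ∈ q.support, ∃ t, m ≤ t ∧ t ≤ n ∧ p.getVert t = x := by
  induction n, hmn using Nat.le_induction with
  | base => exact ⟨.nil, by simp; exact ⟨m, le_rfl, le_rfl, rfl⟩⟩
  | succ n hmn ih =>
    obtain ⟨q, hq⟩ := ih (by omega)
    refine ⟨q.concat (p.adj_getVert_succ (by omega)), ?_⟩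
    intro x hx
    rw [SimpleGraph.Walk.support_concat] at hx
    rw [List.mem_append, List.mem_singleton] at hx
    rcases hx with hx | hx
    · obtain ⟨t, h1, h2, h3⟩ := hq x hx
      exact ⟨t, h1, by omega, h3⟩
    · exact ⟨n + 1, by omega, le_rfl, hx.symm⟩

lemma getVert_injOn {V : Type*} {G : SimpleGraph V} {a b : V} (p : G.Walk a b)
    (hp : p.IsPath) : ∀ m ≤ p.length, ∀ n ≤ p.length,
      p.getVert m = p.getVert n → m = n := by
  induction p with
  | nil => intro m hm n hn _; simp at hm hn; omega
  | cons h q ih =>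
    intro m hm n hn heq
    have hq : q.IsPath := hp.of_cons
    have hnot := (SimpleGraph.Walk.cons_isPath_iff _ _).mp hp |>.2
    match m, n with
    | 0, 0 => rfl
    | 0, (n+1) =>
      exfalso
      apply hnot
      rw [SimpleGraph.Walk.getVert_zero, SimpleGraph.Walk.getVert_cons_succ] at heq
      rw [SimpleGraph.Walk.mem_support_iff_exists_getVert]
      exact ⟨n, heq.symm, by simpa using hn⟩
    | (m+1), 0 =>
      exfalso
      apply hnot
      rw [SimpleGraph.Walk.getVert_zero, SimpleGraph.Walk.getVert_cons_succ] at heq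
      rw [SimpleGraph.Walk.mem_support_iff_exists_getVert]
      exact ⟨m, heq, by simpa using hm⟩
    | (m+1), (n+1) =>
      rw [SimpleGraph.Walk.getVert_cons_succ, SimpleGraph.Walk.getVert_cons_succ] at heq
      have := ih hq m (by simpa using hm) n (by simpa using hn) heq
      omega

/-- Vertices `u` and `v` are biconnected in `G`: they are distinct, connected by a walk,
and remain connected after removal of any vertex other than `u` and `v`. -/
def Biconnected {V : Type*} (G : SimpleGraph V) (u v : V) : Prop :=
  u ≠ v ∧ Nonempty (G.Walk u v) ∧
    ∀ w : V, w ∉ ({u, v} : Set V) → ∃ p : G.Walk u v, w ∉ p.support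

theorem stmt_0 {V : Type*} [Fintype V] (G : SimpleGraph V) {a b : V}
    (p : G.Walk a b) (hp : p.IsPath) (i j k : ℕ)
    (hij : i ≤ j) (hjk : j ≤ k) (hk : k ≤ p.length)
    (hbc : Biconnected G (p.getVert i) (p.getVert k)) :
    p.getVert i = p.getVert j ∨ Biconnected G (p.getVert i) (p.getVert j) := by
  by_cases hne : p.getVert i = p.getVert j
  · exact Or.inl hne
  right
  obtain ⟨hik, -, hbw⟩ := hbc
  have hinj := getVert_injOn p hp
  obtain ⟨qij, hqij⟩ := subwalk_exists p i j hij (le_trans hjk hk)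
  obtain ⟨qjk, hqjk⟩ := subwalk_exists p j k hjk hk
  refine ⟨hne, ⟨qij⟩, ?_⟩
  intro w hw
  simp only [Set.mem_insert_iff, Set.mem_singleton_iff, not_or] at hw
  obtain ⟨hwi, hwj⟩ := hw
  by_cases hwq : w ∈ qij.support
  · -- w is an interior vertex p.getVert t with i ≤ t ≤ j; use biconnectedness of i,k
    obtain ⟨t, hit, htj, htw⟩ := hqij w hwq
    have htli : t ≤ p.length := le_trans htj (le_trans hjk hk)
    have hti : t ≠ i := fun h => hwi (h ▸ htw.symm)
    have htj' : t ≠ j := fun h => hwj (h ▸ htw.symm)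
    have hwk : w ≠ p.getVert k := by
      intro h
      have := hinj t htli k hk (htw.trans h)
      omega
    obtain ⟨r, hr⟩ := hbw w (by
      simp only [Set.mem_insert_iff, Set.mem_singleton_iff, not_or]
      exact ⟨hwi, hwk⟩)
    -- walk from i to k avoiding w, then back from k to j along p
    have hwjk : w ∉ qjk.support := by
      intro hmem
      obtain ⟨s, hjs, hsk, hsw⟩ := hqjk w hmem
      have := hinj t htli s (le_trans hsk hk) (htw.trans hsw.symm)
      omega
    refine ⟨r.append qjk.reverse, ?_⟩
    rw [SimpleGraph.Walk.mem_support_append_iff]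
    push_neg
    exact ⟨hr, by rwa [SimpleGraph.Walk.support_reverse, List.mem_reverse]⟩
  · exact ⟨qij, hwq⟩
end

section
/- Let G be a finite simple graph, let a and b be biconnected vertices of G, and let p be a path in G from a to b. Then every vertex c in the support of p with c ∉ {a, b} is biconnected to a and biconnected to b in G. -/
theorem stmt_1 {V : Type*} [Fintype V] (G : SimpleGraph V) {a b : V}
    (hab : Biconnected G a b) (p : G.Walk a b) (hp : p.IsPath) :
    ∀ c ∈ p.support, c ∉ ({a, b} : Set V) →
      Biconnected G c a ∧ Biconnected G c b := by
  classical
  intro c hc hcab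
  have hca : c ≠ a := fun h => hcab (by simp [h])
  have hcb : c ≠ b := fun h => hcab (by simp [h])
  set p1 := p.takeUntil c hc with hp1
  set p2 := p.dropUntil c hc with hp2
  have hspec : p1.append p2 = p := p.take_spec hc
  have hnodup : (p1.support ++ p2.support.tail).Nodup := by
    have := hp.support_nodup
    rw [← hspec, SimpleGraph.Walk.support_append] at this
    exact this
  have hdisj : ∀ w, w ∈ p1.support → w ∈ p2.support.tail → False := by
    intro w h1 h2
    exact (List.disjoint_of_nodup_append hnodup) h1 h2
  have hmem2 : ∀ w, w ≠ c → w ∈ p2.support → w ∈ p2.support.tail := by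
    intro w hwc hw
    rw [p2.support_eq_cons, List.mem_cons] at hw
    rcases hw with h | h
    · exact absurd h hwc
    · exact h
  have hb2 : b ∈ p2.support := p2.end_mem_support
  have ha1 : a ∈ p1.support := p1.start_mem_support
  constructor
  · refine ⟨hca, ⟨p1.reverse⟩, ?_⟩
    intro w hw
    have hwc : w ≠ c := fun h => hw (by simp [h])
    have hwa : w ≠ a := fun h => hw (by simp [h])
    by_cases hw1 : w ∈ p1.support
    · -- w before c on p; w ∉ p2.support, w ≠ b, so use q avoiding w
      have hw2 : w ∉ p2.support := fun h => hdisj w hw1 (hmem2 w hwc h)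
      have hwb : w ≠ b := fun h => hw2 (h ▸ hb2)
      obtain ⟨q, hq⟩ := hab.2.2 w (by simp [hwa, hwb])
      refine ⟨p2.append q.reverse, ?_⟩
      rw [SimpleGraph.Walk.support_append]
      intro h
      rcases List.mem_append.mp h with h | h
      · exact hw2 h
      · exact hq (by
          have := List.mem_of_mem_tail h
          rwa [SimpleGraph.Walk.support_reverse, List.mem_reverse] at this)
    · exact ⟨p1.reverse, by rwa [SimpleGraph.Walk.support_reverse, List.mem_reverse]⟩
  · refine ⟨hcb, ⟨p2⟩, ?_⟩
    intro w hw
    have hwc : w ≠ c := fun h => hw (by simp [h])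
    have hwb : w ≠ b := fun h => hw (by simp [h])
    by_cases hw2 : w ∈ p2.support
    · have hw1 : w ∉ p1.support := fun h => hdisj w h (hmem2 w hwc hw2)
      have hwa : w ≠ a := fun h => hw1 (h ▸ ha1)
      obtain ⟨q, hq⟩ := hab.2.2 w (by simp [hwa, hwb])
      refine ⟨p1.reverse.append q, ?_⟩
      rw [SimpleGraph.Walk.support_append]
      intro h
      rcases List.mem_append.mp h with h | h
      · rw [SimpleGraph.Walk.support_reverse, List.mem_reverse] at h
        exact hw1 h
      · exact hq (List.mem_of_mem_tail h)
    · exact ⟨p2, hw2⟩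
end

section
/- Let G be a finite simple graph, let p be a path in G from u to v, and let i be a natural number with 0 < i < length(p); write m for the i-th vertex of p. Then there is a walk from u to v in G whose support does not contain m if and only if there exists a cycle in G whose support contains m, the (i−1)-st vertex of p, and the (i+1)-st vertex of p. (This is the graph-theoretic dichotomy underlying the paper's Lemma 5.3: either removing the internal spine vertex m separates the spine, or there is a biconnected component containing both spine edges incident to m.) -/
/-!
Write `a` and `b` for the neighbours of `m` on the path `p`. The pieces of `p` before `a` and
after `b` avoid `m`, so `u` and `v` are joined avoiding `m` exactly when `a` and `b` are. A path
from `a` to `b` avoiding `m` closes up with the edges `b m` and `m a` to a cycle through all three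
vertices; conversely, deleting `m` from a cycle through `m`, `a` and `b` leaves a path containing
both `a` and `b`.
-/

namespace SimpleGraph.Walk

variable {V : Type*} {G : SimpleGraph V} {u v : V}

lemma IsPath.getVert_notMem_support_take {p : G.Walk u v} (hp : p.IsPath) {j k : ℕ}
    (hjk : j < k) (hk : k ≤ p.length) : p.getVert k ∉ (p.take j).support := by
  rw [mem_support_iff_exists_getVert]
  rintro ⟨n, hn, -⟩
  rw [take_getVert] at hn
  have : min j n = k := hp.getVert_injOn (show min j n ≤ p.length by omega) hk hn
  omega

lemma IsPath.getVert_notMem_support_drop {p : G.Walk u v} (hp : p.IsPath) {j k : ℕ}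
    (hkj : k < j) (hj : j ≤ p.length) : p.getVert k ∉ (p.drop j).support := by
  rw [mem_support_iff_exists_getVert]
  rintro ⟨n, hn, hnle⟩
  rw [drop_getVert] at hn
  rw [drop_length] at hnle
  have : j + n = k := hp.getVert_injOn (show j + n ≤ p.length by omega)
    (show k ≤ p.length by omega) hn
  omega

lemma exists_walk_notMem_support_iff {a b m : V} (p₁ : G.Walk u a) (p₂ : G.Walk b v)
    (h₁ : m ∉ p₁.support) (h₂ : m ∉ p₂.support) :
    (∃ q : G.Walk u v, m ∉ q.support) ↔ ∃ w : G.Walk a b, m ∉ w.support := by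
  constructor
  · rintro ⟨q, hq⟩
    exact ⟨p₁.reverse.append (q.append p₂.reverse), by simp [*]⟩
  · rintro ⟨w, hw⟩
    exact ⟨p₁.append (w.append p₂), by simp [*]⟩

lemma isCycle_cons_cons_of_isPath {a m b : V} (ham : G.Adj a m) (hmb : G.Adj m b) (hab : a ≠ b)
    {q : G.Walk b a} (hq : q.IsPath) (hm : m ∉ q.support) :
    (cons ham (cons hmb q)).IsCycle := by
  rw [cons_isCycle_iff, cons_isPath_iff, edges_cons, List.mem_cons, not_or]
  refine ⟨⟨hq, hm⟩, ?_, fun h => hm (q.snd_mem_support_of_mem_edges h)⟩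
  rw [Sym2.eq_iff]
  rintro (⟨rfl, -⟩ | ⟨rfl, -⟩)
  exacts [ham.ne rfl, hab rfl]

lemma exists_isCycle_of_walk_notMem_support {a m b : V} (ham : G.Adj a m) (hmb : G.Adj m b)
    (hab : a ≠ b) (w : G.Walk a b) (hm : m ∉ w.support) :
    ∃ c : G.Walk a a, c.IsCycle ∧ m ∈ c.support ∧ b ∈ c.support := by
  classical
  have hm' : m ∉ w.bypass.reverse.support := by
    simpa using fun h => hm (w.support_bypass_subset_support h)
  exact ⟨cons ham (cons hmb w.bypass.reverse),
    isCycle_cons_cons_of_isPath ham hmb hab w.bypass_isPath.reverse hm', by simp, by simp⟩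

lemma IsCycle.exists_walk_notMem_support {x a m b : V} {c : G.Walk x x} (hc : c.IsCycle)
    (hmc : m ∈ c.support) (hac : a ∈ c.support) (hbc : b ∈ c.support) (ham : a ≠ m)
    (hbm : b ≠ m) : ∃ w : G.Walk a b, m ∉ w.support := by
  classical
  obtain ⟨c', hc', hac', hbc'⟩ : ∃ c' : G.Walk m m, c'.IsCycle ∧ a ∈ c'.support ∧ b ∈ c'.support :=
    ⟨c.rotate m hmc, hc.rotate hmc, (mem_support_rotate_iff ..).mpr hac,
      (mem_support_rotate_iff ..).mpr hbc⟩
  cases c' with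
  | nil => exact (not_isCycle_nil hc').elim
  | cons _ q =>
    have hq : q.IsPath := ((cons_isCycle_iff _ _).mp hc').1
    -- `q` runs from the successor of `m` back to `m`, meeting `m` only at its end.
    have haq : a ∈ q.support := by simpa [ham] using hac'
    have hbq : b ∈ q.support := by simpa [hbm] using hbc'
    refine ⟨(q.takeUntil a haq).reverse.append (q.takeUntil b hbq), ?_⟩
    simp [endpoint_notMem_support_takeUntil hq haq ham.symm,
      endpoint_notMem_support_takeUntil hq hbq hbm.symm]

end SimpleGraph.Walk

open SimpleGraph Walk in
theorem stmt_4_general {V : Type*} (G : SimpleGraph V) {u v : V}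
    (p : G.Walk u v) (hp : p.IsPath) (i : ℕ) (hi0 : 0 < i) (hil : i < p.length) :
    (∃ q : G.Walk u v, p.getVert i ∉ q.support) ↔
      ∃ (x : V) (c : G.Walk x x), c.IsCycle ∧
        p.getVert i ∈ c.support ∧
        p.getVert (i - 1) ∈ c.support ∧
        p.getVert (i + 1) ∈ c.support := by
  have ham : G.Adj (p.getVert (i - 1)) (p.getVert i) := by
    simpa [Nat.sub_add_cancel hi0] using p.adj_getVert_succ (i := i - 1) (by omega)
  have hmb : G.Adj (p.getVert i) (p.getVert (i + 1)) := p.adj_getVert_succ hil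
  have hab : p.getVert (i - 1) ≠ p.getVert (i + 1) := fun h => by
    have := hp.getVert_injOn (show i - 1 ≤ p.length by omega) hil h
    omega
  rw [exists_walk_notMem_support_iff (p.take (i - 1)) (p.drop (i + 1))
    (hp.getVert_notMem_support_take (by omega) hil.le)
    (hp.getVert_notMem_support_drop (by omega) hil)]
  constructor
  · rintro ⟨w, hw⟩
    obtain ⟨c, hc, hmc, hbc⟩ := exists_isCycle_of_walk_notMem_support ham hmb hab w hw
    exact ⟨_, c, hc, hmc, c.start_mem_support, hbc⟩
  · rintro ⟨x, c, hc, hmc, hac, hbc⟩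
    exact hc.exists_walk_notMem_support hmc hac hbc ham.ne hmb.ne.symm

theorem stmt_4 {V : Type*} [Fintype V] (G : SimpleGraph V) {u v : V}
    (p : G.Walk u v) (hp : p.IsPath) (i : ℕ) (hi0 : 0 < i) (hil : i < p.length) :
    (∃ q : G.Walk u v, p.getVert i ∉ q.support) ↔
      ∃ (x : V) (c : G.Walk x x), c.IsCycle ∧
        p.getVert i ∈ c.support ∧
        p.getVert (i - 1) ∈ c.support ∧
        p.getVert (i + 1) ∈ c.support :=
  stmt_4_general G p hp i hi0 hil
end

section
/- Let T be a tree on a finite vertex type V (a connected acyclic simple graph), let x ≠ y be vertices with x and y not adjacent in T, and let G be the simple graph obtained from T by adding the edge {x, y} (so G.Adj a b iff T.Adj a b or {a, b} = {x, y}). Then for all distinct vertices u and v that are not adjacent in G: u and v are biconnected in G if and only if there exists a path from x to y in T whose support contains both u and v. (This is the fundamental-cycle fact: the unique new biconnected component of T plus a non-tree edge consists exactly of the tree path between the edge's endpoints.) -/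
/-!
Let `P` be the tree path from `x` to `y`. If `u, v` lie on `P`, they lie on the cycle `P + xy`,
so removing any third vertex leaves one of the two arcs between them intact. Conversely, if
`u ∉ P`, let `w` be the neighbour of `u` on the tree path towards `v`. Every `T`-walk from `u`
to `v` passes through `w`, and the set of vertices reachable from `u` in `T - w` contains either
both or neither of `x, y`, so the edge `xy` does not help: every `G`-walk from `u` to `v` passes
through `w` as well.
-/

open SimpleGraph Walk

theorem Biconnected.symm {V : Type*} {G : SimpleGraph V} {u v : V} (h : Biconnected G u v) :
    Biconnected G v u := by
  obtain ⟨hne, ⟨p⟩, havoid⟩ := h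
  refine ⟨hne.symm, ⟨p.reverse⟩, fun w hw => ?_⟩
  obtain ⟨r, hr⟩ := havoid w (by rwa [Set.pair_comm])
  exact ⟨r.reverse, by rwa [support_reverse, List.mem_reverse]⟩

namespace SimpleGraph

variable {V : Type*} {G T : SimpleGraph V}

theorem biconnected_of_isPath_append {x y u v : V} (hxy : G.Adj x y) (huv : u ≠ v)
    (p₁ : G.Walk x u) (p₂ : G.Walk u v) (p₃ : G.Walk v y)
    (hp : (p₁.append (p₂.append p₃)).IsPath) : Biconnected G u v := by
  refine ⟨huv, ⟨p₂⟩, fun w hw => ?_⟩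
  simp only [Set.mem_insert_iff, Set.mem_singleton_iff, not_or] at hw
  by_cases hw₂ : w ∈ p₂.support
  · have hw₁ : w ∉ p₁.support := fun hw₁ =>
      hp.ne_of_mem_support_of_append hw.1 hw₁ (by simp [hw₂]) rfl
    have hw₃ : w ∉ p₃.support := fun hw₃ =>
      hp.of_append_right.ne_of_mem_support_of_append hw.2 hw₂ hw₃ rfl
    refine ⟨p₁.reverse.append (cons hxy p₃.reverse), ?_⟩
    simp only [mem_support_append_iff, support_reverse, List.mem_reverse, support_cons,
      List.mem_cons, not_or]
    exact ⟨hw₁, fun h => hw₁ (h ▸ p₁.start_mem_support), hw₃⟩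
  · exact ⟨p₂, hw₂⟩

theorem biconnected_of_mem_support_of_isPath {x y u v : V} (hxy : G.Adj x y)
    {p : G.Walk x y} (hp : p.IsPath) (hu : u ∈ p.support) (hv : v ∈ p.support) (huv : u ≠ v) :
    Biconnected G u v := by
  obtain ⟨q, r, rfl⟩ := mem_support_iff_exists_append.mp hu
  rcases (mem_support_append_iff q r).mp hv with hvq | hvr
  · obtain ⟨q₁, q₂, rfl⟩ := mem_support_iff_exists_append.mp hvq
    rw [← append_assoc] at hp
    exact (biconnected_of_isPath_append hxy huv.symm q₁ q₂ r hp).symm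
  · obtain ⟨r₁, r₂, rfl⟩ := mem_support_iff_exists_append.mp hvr
    exact biconnected_of_isPath_append hxy huv q r₁ r₂ hp

theorem IsAcyclic.support_subset_support_of_isPath (hT : T.IsAcyclic) {u v : V}
    {p : T.Walk u v} (hp : p.IsPath) (r : T.Walk u v) : p.support ⊆ r.support := by
  classical
  obtain rfl : p = r.bypass :=
    Subtype.mk.inj <| (hT.subsingleton_path u v).elim ⟨p, hp⟩ ⟨_, r.bypass_isPath⟩
  exact r.support_bypass_subset_support

theorem IsAcyclic.mem_support_of_adj_of_walk_avoiding (hT : T.IsAcyclic) {x y u w : V}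
    {P : T.Walk x y} (hP : P.IsPath) (hwP : w ∈ P.support) (hwu : T.Adj w u)
    (Q : T.Walk u x) (hQ : w ∉ Q.support) : u ∈ P.support := by
  classical
  have hQ' : w ∉ Q.reverse.bypass.support := fun h =>
    hQ (by simpa using Q.reverse.support_bypass_subset_support h)
  exact P.support_takeUntil_subset_support hwP <|
    hT.mem_support_of_ne_mem_support_of_adj_of_isPath (hP.takeUntil hwP)
      Q.reverse.bypass_isPath hwu hQ'

theorem IsAcyclic.exists_walk_avoiding_of_notMem_support (hT : T.IsAcyclic) {x y u w : V}
    {P : T.Walk x y} (hP : P.IsPath) (hu : u ∉ P.support) (huw : T.Adj u w)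
    (h : ∃ Q : T.Walk u x, w ∉ Q.support) : ∃ Q : T.Walk u y, w ∉ Q.support := by
  obtain ⟨Q, hQ⟩ := h
  by_cases hwP : w ∈ P.support
  · exact absurd (hT.mem_support_of_adj_of_walk_avoiding hP hwP huw.symm Q hQ) hu
  · exact ⟨Q.append P, by simp [hQ, hwP]⟩

theorem exists_walk_avoiding_of_walk {x y u w : V}
    (hG : ∀ a b, G.Adj a b → T.Adj a b ∨ s(a, b) = s(x, y))
    (hxy : (∃ Q : T.Walk u x, w ∉ Q.support) ↔ (∃ Q : T.Walk u y, w ∉ Q.support))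
    {a b : V} (r : G.Walk a b) (hr : w ∉ r.support) (ha : ∃ Q : T.Walk u a, w ∉ Q.support) :
    ∃ Q : T.Walk u b, w ∉ Q.support := by
  induction r with
  | nil => exact ha
  | @cons a c b hac r ih =>
    rw [support_cons, List.mem_cons, not_or] at hr
    refine ih hr.2 ?_
    rcases hG a c hac with hTac | hxy'
    · obtain ⟨Q, hQ⟩ := ha
      have hwc : w ≠ c := fun h => hr.2 (h ▸ r.start_mem_support)
      exact ⟨Q.concat hTac, by simp [support_concat, hQ, hwc]⟩
    · rcases Sym2.eq_iff.mp hxy' with ⟨rfl, rfl⟩ | ⟨rfl, rfl⟩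
      exacts [hxy.mp ha, hxy.mpr ha]

theorem IsTree.mem_support_of_biconnected (hT : T.IsTree) {x y u v : V}
    (hG : ∀ a b, G.Adj a b → T.Adj a b ∨ s(a, b) = s(x, y))
    {P : T.Walk x y} (hP : P.IsPath) (huv : ¬ T.Adj u v) (h : Biconnected G u v) :
    u ∈ P.support := by
  by_contra hu
  obtain ⟨hne, -, havoid⟩ := h
  obtain ⟨q, hq⟩ := (hT.existsUnique_path u v).exists
  have huw : T.Adj u q.snd := q.adj_snd (not_nil_of_ne hne)
  have hwv : q.snd ≠ v := fun h => huv (h ▸ huw)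
  obtain ⟨r, hr⟩ := havoid q.snd (by simp [huw.ne', hwv])
  have hxy := Iff.intro (hT.isAcyclic.exists_walk_avoiding_of_notMem_support hP hu huw)
    (hT.isAcyclic.exists_walk_avoiding_of_notMem_support hP.reverse (by simpa using hu) huw)
  obtain ⟨Q, hQ⟩ := exists_walk_avoiding_of_walk hG hxy r hr ⟨nil, by simpa using huw.ne'⟩
  exact hQ (hT.isAcyclic.support_subset_support_of_isPath hq Q (q.getVert_mem_support 1))

end SimpleGraph

theorem stmt_6_general {V : Type*} (T G : SimpleGraph V) (hT : T.IsTree)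
    {x y : V}
    (hG : ∀ a b : V, G.Adj a b ↔ (T.Adj a b ∨ s(a, b) = s(x, y))) :
    ∀ u v : V, u ≠ v → ¬ G.Adj u v →
      (Biconnected G u v ↔
        ∃ p : T.Walk x y, p.IsPath ∧ u ∈ p.support ∧ v ∈ p.support) := by
  intro u v huv hGuv
  have hTG : T ≤ G := fun {a b} h => (hG a b).mpr (Or.inl h)
  have hTuv : ¬ T.Adj u v := fun h => hGuv (hTG h)
  have hG' := fun a b => (hG a b).mp
  constructor
  · intro h
    obtain ⟨P, hP⟩ := (hT.existsUnique_path x y).exists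
    exact ⟨P, hP, hT.mem_support_of_biconnected hG' hP hTuv h,
      hT.mem_support_of_biconnected hG' hP (fun h => hTuv h.symm) h.symm⟩
  · rintro ⟨P, hP, hu, hv⟩
    exact biconnected_of_mem_support_of_isPath ((hG x y).mpr (Or.inr rfl)) (hP.mapLe hTG)
      (by rwa [support_mapLe_eq_support]) (by rwa [support_mapLe_eq_support]) huv

theorem stmt_6 {V : Type*} [Fintype V] (T G : SimpleGraph V) (hT : T.IsTree)
    {x y : V} (hxy : x ≠ y) (hnadj : ¬ T.Adj x y)
    (hG : ∀ a b : V, G.Adj a b ↔ (T.Adj a b ∨ s(a, b) = s(x, y))) :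
    ∀ u v : V, u ≠ v → ¬ G.Adj u v →
      (Biconnected G u v ↔
        ∃ p : T.Walk x y, p.IsPath ∧ u ∈ p.support ∧ v ∈ p.support) :=
  stmt_6_general T G hT hG
end

section
/- Let T be a tree on a finite vertex type V (a connected acyclic simple graph), let x ≠ y be vertices with x and y not adjacent in T, and let G be the simple graph obtained from T by adding the edge {x, y} (so G.Adj a b iff T.Adj a b or {a, b} = {x, y}). Then every cycle c in G uses the edge {x, y} (i.e., s(x,y) lies in the edge list of c), and the set of vertices in the support of c equals the set of vertices in the support of the (unique) path from x to y in T. (Every non-tree edge, together with the spanning-tree path between its endpoints, forms the unique cycle it creates.) -/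
/-!
A cycle of `G` avoiding the new edge `s(x, y)` would be a cycle of the tree `T`. A cycle through
it, with that edge removed, is a path from `y` to `x` in `T` on the same vertices, hence the
reverse of the unique tree path.
-/

open SimpleGraph

namespace SimpleGraph.Walk

variable {V : Type*} {G T : SimpleGraph V}

lemma edges_subset_of_edgeSet_subset_insert {e : Sym2 V} (hGT : G.edgeSet ⊆ insert e T.edgeSet)
    {u v : V} (p : G.Walk u v) (he : e ∉ p.edges) : ∀ e' ∈ p.edges, e' ∈ T.edgeSet :=
  fun _ he' => (hGT (p.edges_subset_edgeSet he')).resolve_left (ne_of_mem_of_not_mem he' he)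

lemma IsCycle.exists_isPath_of_mem_edges {u x y : V} {c : G.Walk u u} (hc : c.IsCycle)
    (he : s(x, y) ∈ c.edges) :
    ∃ q : G.Walk y x, q.IsPath ∧ s(x, y) ∉ q.edges ∧ {w | w ∈ c.support} = {w | w ∈ q.support} := by
  classical
  have hx : x ∈ c.support := c.fst_mem_support_of_mem_edges he
  have hadj : (c.rotate x hx).toSubgraph.Adj x y := by
    rw [← Subgraph.mem_edgeSet, mem_edges_toSubgraph]
    exact (c.rotate_edges x hx).mem_iff.mpr he
  obtain ⟨c', hc', hsnd, hverts⟩ := (hc.rotate hx).exists_isCycle_snd_verts_eq hadj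
  cases c' with
  | nil => exact absurd hc' not_isCycle_nil
  | cons h q =>
    rw [snd_cons] at hsnd
    subst hsnd
    obtain ⟨hq, hqe⟩ := (cons_isCycle_iff q h).mp hc'
    refine ⟨q, hq, hqe, ?_⟩
    ext w
    have hw := congrArg (w ∈ ·) hverts
    simp only [mem_verts_toSubgraph, mem_support_rotate_iff, support_cons, List.mem_cons,
      eq_iff_iff] at hw
    exact hw.symm.trans <| or_iff_right_of_imp (· ▸ q.end_mem_support)

end SimpleGraph.Walk

theorem stmt_7_general {V : Type*} (T G : SimpleGraph V) (hT : T.IsTree)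
    {x y : V}
    (hG : ∀ a b : V, G.Adj a b ↔ (T.Adj a b ∨ s(a, b) = s(x, y))) :
    ∀ (z : V) (c : G.Walk z z), c.IsCycle →
      s(x, y) ∈ c.edges ∧
      ∀ p : T.Walk x y, p.IsPath →
        ({w : V | w ∈ c.support} = {w : V | w ∈ p.support}) := by
  have hGT : G.edgeSet ⊆ insert s(x, y) T.edgeSet := by
    rintro ⟨a, b⟩ hab
    rw [mem_edgeSet, hG] at hab
    exact hab.symm
  intro z c hc
  have hedge : s(x, y) ∈ c.edges := by
    by_contra h
    exact hT.isAcyclic _ (hc.transfer (c.edges_subset_of_edgeSet_subset_insert hGT h))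
  refine ⟨hedge, fun p hp => ?_⟩
  obtain ⟨q, hq, hqe, hsupp⟩ := hc.exists_isPath_of_mem_edges hedge
  have hqT := q.edges_subset_of_edgeSet_subset_insert hGT hqe
  have hpq : p = (q.transfer T hqT).reverse :=
    congrArg Subtype.val <|
      (hT.isAcyclic.subsingleton_path x y).elim ⟨p, hp⟩ ⟨_, (hq.transfer hqT).reverse⟩
  rw [hsupp, hpq]
  ext w
  simp [Walk.support_transfer]

theorem stmt_7 {V : Type*} [Fintype V] (T G : SimpleGraph V) (hT : T.IsTree)
    {x y : V} (hxy : x ≠ y) (hnadj : ¬ T.Adj x y)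
    (hG : ∀ a b : V, G.Adj a b ↔ (T.Adj a b ∨ s(a, b) = s(x, y))) :
    ∀ (z : V) (c : G.Walk z z), c.IsCycle →
      s(x, y) ∈ c.edges ∧
      ∀ p : T.Walk x y, p.IsPath →
        ({w : V | w ∈ c.support} = {w : V | w ∈ p.support}) :=
  stmt_7_general T G hT hG
end

section
/- Ordering of separating cutvertices. Let G be a finite simple graph, let u and v be vertices joined by a walk in G, and let w₁ ≠ w₂ be two vertices each of which separates u and v in G. Then exactly one of the following holds: w₁ separates u and w₂ in G, or w₂ separates u and w₁ in G. (Consequently the cutvertices separating a connected, non-biconnected pair u, v are linearly ordered from u to v, so there is a well-defined first and last cutvertex separating them, as used in the paper's biconnectivity queries.) -/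
/-- A vertex `w` separates vertices `x` and `y` in `G` if `w ∉ {x, y}` and every walk
from `x` to `y` in `G` passes through `w`. -/
def Separates {V : Type*} (G : SimpleGraph V) (w x y : V) : Prop :=
  w ∉ ({x, y} : Set V) ∧ ¬ ∃ p : G.Walk x y, w ∉ p.support

open SimpleGraph Walk in
private lemma aux_take {V : Type*} [DecidableEq V] {G : SimpleGraph V} {u b : V} (q : G.Walk u b)
    (hcount : q.support.count b ≤ 1) {a : V} (ha : a ∈ q.support) (hab : a ≠ b) :
    b ∉ (q.takeUntil a ha).support := by
  intro hb
  have hspec := q.take_spec ha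
  have hsupp : q.support = (q.takeUntil a ha).support ++ (q.dropUntil a ha).support.tail := by
    conv_lhs => rw [← hspec]
    exact support_append _ _
  have hb2 : b ∈ (q.dropUntil a ha).support.tail :=
    end_mem_tail_support_of_ne hab (q.dropUntil a ha)
  have : 2 ≤ q.support.count b := by
    rw [hsupp, List.count_append]
    have h1 : 1 ≤ (q.takeUntil a ha).support.count b := List.count_pos_iff.mpr hb
    have h2 : 1 ≤ ((q.dropUntil a ha).support.tail).count b := List.count_pos_iff.mpr hb2
    omega
  omega

open SimpleGraph Walk in
private lemma aux_drop {V : Type*} [DecidableEq V] {G : SimpleGraph V} {b v : V} (q : G.Walk b v)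
    (hcount : q.support.count b ≤ 1) {a : V} (ha : a ∈ q.support) (hab : a ≠ b) :
    b ∉ (q.dropUntil a ha).support := by
  intro hb
  have hspec := q.take_spec ha
  have hsupp : q.support = (q.takeUntil a ha).support ++ (q.dropUntil a ha).support.tail := by
    conv_lhs => rw [← hspec]
    exact support_append _ _
  have hb2 : b ∈ (q.dropUntil a ha).support.tail := by
    cases (q.dropUntil a ha).support_eq_cons ▸ hb with
    | head => exact absurd rfl hab
    | tail _ h => rwa [(q.dropUntil a ha).support_eq_cons]; 
  have hb1 : b ∈ (q.takeUntil a ha).support := start_mem_support _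
  have : 2 ≤ q.support.count b := by
    rw [hsupp, List.count_append]
    have h1 : 1 ≤ (q.takeUntil a ha).support.count b := List.count_pos_iff.mpr hb1
    have h2 : 1 ≤ ((q.dropUntil a ha).support.tail).count b := List.count_pos_iff.mpr hb2
    omega
  omega

theorem stmt_10 {V : Type*} [Fintype V] (G : SimpleGraph V) {u v w₁ w₂ : V}
    (hconn : Nonempty (G.Walk u v)) (hw : w₁ ≠ w₂)
    (h₁ : Separates G w₁ u v) (h₂ : Separates G w₂ u v) :
    Xor' (Separates G w₁ u w₂) (Separates G w₂ u w₁) := by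
  classical
  obtain ⟨p0⟩ := hconn
  set p : G.Walk u v := p0.toPath.val with hpdef
  have hp : p.IsPath := p0.toPath.2
  have hmem₁ : ∀ q : G.Walk u v, w₁ ∈ q.support := by
    have := h₁.2; push_neg at this; simpa using this
  have hmem₂ : ∀ q : G.Walk u v, w₂ ∈ q.support := by
    have := h₂.2; push_neg at this; simpa using this
  have hw₁u : w₁ ≠ u := by intro h; exact h₁.1 (by simp [h])
  have hw₁v : w₁ ≠ v := by intro h; exact h₁.1 (by simp [h])
  have hw₂u : w₂ ≠ u := by intro h; exact h₂.1 (by simp [h])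
  have hw₂v : w₂ ≠ v := by intro h; exact h₂.1 (by simp [h])
  have h2p : w₂ ∈ p.support := hmem₂ p
  set t := p.takeUntil w₂ h2p with htdef
  set d := p.dropUntil w₂ h2p with hddef
  have hsupp : p.support = t.support ++ d.support.tail := by
    conv_lhs => rw [← p.take_spec h2p]
    exact SimpleGraph.Walk.support_append _ _
  have hnodup : p.support.Nodup := hp.support_nodup
  have h1p : w₁ ∈ p.support := hmem₁ p
  have hdisj : ∀ x, x ∈ t.support → x ∈ d.support.tail → False := by
    rw [hsupp] at hnodup
    intro x hx hx'
    exact (List.disjoint_of_nodup_append hnodup) hx hx'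
  rw [hsupp] at h1p
  rcases List.mem_append.mp h1p with h1t | h1d
  · -- w₁ before w₂ : w₁ separates u w₂, and ¬ (w₂ separates u w₁)
    left
    constructor
    · refine ⟨by simp [hw₁u, hw], ?_⟩
      rintro ⟨q, hq⟩
      have : w₁ ∈ (q.append d).support := hmem₁ _
      rw [SimpleGraph.Walk.support_append] at this
      rcases List.mem_append.mp this with h | h
      · exact hq h
      · exact hdisj w₁ h1t h
    · intro hsep
      refine hsep.2 ⟨t.takeUntil w₁ h1t, ?_⟩
      have hcount : t.support.count w₂ ≤ 1 :=
        le_of_eq (p.count_support_takeUntil_eq_one h2p)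
      exact aux_take t hcount h1t hw
  · -- w₂ before w₁
    right
    have h1d' : w₁ ∈ d.support := List.mem_of_mem_tail h1d
    have h1t' : w₁ ∉ t.support := fun h => hdisj w₁ h h1d
    constructor
    · refine ⟨by simp [hw₂u, hw.symm], ?_⟩
      rintro ⟨q, hq⟩
      have hdp : d.IsPath := hp.dropUntil h2p
      have hcount : d.support.count w₂ ≤ 1 :=
        List.nodup_iff_count_le_one.mp hdp.support_nodup w₂
      have hnd : w₂ ∉ (d.dropUntil w₁ h1d').support :=
        aux_drop d hcount h1d' hw
      have : w₂ ∈ (q.append (d.dropUntil w₁ h1d')).support := hmem₂ _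
      rw [SimpleGraph.Walk.support_append] at this
      rcases List.mem_append.mp this with h | h
      · exact hq h
      · exact hnd (List.mem_of_mem_tail h)
    · intro hsep
      exact hsep.2 ⟨t, h1t'⟩
end
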